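/- arXiv:1107.4428 — 4 statements merged into one kernel-verified Lean document; each statement's English description precedes it below -/
import Mathlib

section
/- If a spherical triangle v₁v₂v₃ has a side of length strictly greater than π/3, then no isometry of the sphere places it inside the regular spherical triangle of side length π/3; in particular it cannot be placed in the proper configuration (one vertex at t₁, a second vertex on segment [t₁,t₂], third vertex inside △t₁v₂t₃). -/
open scoped RealInnerProductSpace

/-- Geodesic (angular) distance between points of the unit sphere in `ℝ³`. -/
noncomputable def sdist (x y : EuclideanSpace ℝ (Fin 3)) : ℝ :=
  Real.arccos ⟪x, y⟫

/-- The convex cone spanned by three points (nonnegative combinations). -/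
def scone (a b c : EuclideanSpace ℝ (Fin 3)) : Set (EuclideanSpace ℝ (Fin 3)) :=
  {x | ∃ α β γ : ℝ, 0 ≤ α ∧ 0 ≤ β ∧ 0 ≤ γ ∧ x = α • a + β • b + γ • c}

/-- The closed spherical triangle with vertices `a`, `b`, `c`: the trace on the
unit sphere of the convex cone they span. -/
def sTri (a b c : EuclideanSpace ℝ (Fin 3)) : Set (EuclideanSpace ℝ (Fin 3)) :=
  {x | ‖x‖ = 1 ∧ x ∈ scone a b c}

/-- The (relative) interior of the spherical triangle `abc`: the trace on the
unit sphere of the interior of the cone spanned by `a`, `b`, `c`. -/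
def sTriInt (a b c : EuclideanSpace ℝ (Fin 3)) : Set (EuclideanSpace ℝ (Fin 3)) :=
  {x | ‖x‖ = 1 ∧ x ∈ interior (scone a b c)}

/-- The geodesic segment (minor arc) between unit vectors `a`, `b`: points of
the unit sphere that are nonnegative combinations of `a` and `b`. -/
def sSeg (a b : EuclideanSpace ℝ (Fin 3)) : Set (EuclideanSpace ℝ (Fin 3)) :=
  {x | ‖x‖ = 1 ∧ ∃ α β : ℝ, 0 ≤ α ∧ 0 ≤ β ∧ x = α • a + β • b}

/-- The interior angle of a spherical triangle at the unit vertex `b`, between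
the geodesics towards `a` and towards `c`. -/
noncomputable def sAngle (a b c : EuclideanSpace ℝ (Fin 3)) : ℝ :=
  InnerProductGeometry.angle (a - ⟪a, b⟫ • b) (c - ⟪c, b⟫ • b)

/-- `t₁ t₂ t₃` form the regular spherical triangle `T₀` of side length `π/3`:
unit vectors with pairwise inner products `cos (π/3) = 1/2`. -/
def RegT (t₁ t₂ t₃ : EuclideanSpace ℝ (Fin 3)) : Prop :=
  ‖t₁‖ = 1 ∧ ‖t₂‖ = 1 ∧ ‖t₃‖ = 1 ∧
    ⟪t₁, t₂⟫ = 1/2 ∧ ⟪t₁, t₃⟫ = 1/2 ∧ ⟪t₂, t₃⟫ = 1/2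

/-- `v₁ v₂ v₃` is properly placed in the regular triangle `t₁ t₂ t₃`:
`v₁ = t₁`, `v₂` lies on the segment `[t₁, t₂]`, and `v₃` lies inside the
spherical triangle `t₁ v₂ t₃`. -/
def ProperlyPlaced (t₁ t₂ t₃ v₁ v₂ v₃ : EuclideanSpace ℝ (Fin 3)) : Prop :=
  v₁ = t₁ ∧ v₂ ∈ sSeg t₁ t₂ ∧ v₃ ∈ sTriInt t₁ v₂ t₃

/-- A spherical triangle with side lengths `a = |v₁v₂|`, `b = |v₁v₃|`,
`c = |v₂v₃|` can be properly placed in the regular triangle `T₀`. -/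
def Placeable (a b c : ℝ) : Prop :=
  ∃ t₁ t₂ t₃ v₁ v₂ v₃ : EuclideanSpace ℝ (Fin 3),
    RegT t₁ t₂ t₃ ∧ ‖v₁‖ = 1 ∧ ‖v₂‖ = 1 ∧ ‖v₃‖ = 1 ∧
    sdist v₁ v₂ = a ∧ sdist v₁ v₃ = b ∧ sdist v₂ v₃ = c ∧
    ProperlyPlaced t₁ t₂ t₃ v₁ v₂ v₃

set_option maxHeartbeats 1000000 in
lemma inner_ge_half_of_mem_sTri {t₁ t₂ t₃ : EuclideanSpace ℝ (Fin 3)}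
    (ht : RegT t₁ t₂ t₃) {x y : EuclideanSpace ℝ (Fin 3)}
    (hx : x ∈ sTri t₁ t₂ t₃) (hy : y ∈ sTri t₁ t₂ t₃) : (1:ℝ)/2 ≤ ⟪x, y⟫ := by
  obtain ⟨ht1, ht2, ht3, h12, h13, h23⟩ := ht
  obtain ⟨hx1, α, β, γ, hα, hβ, hγ, hxe⟩ := hx
  obtain ⟨hy1, α', β', γ', hα', hβ', hγ', hye⟩ := hy
  have e11 : ⟪t₁, t₁⟫ = (1:ℝ) := by
    rw [real_inner_self_eq_norm_sq, ht1]; norm_num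
  have e22 : ⟪t₂, t₂⟫ = (1:ℝ) := by
    rw [real_inner_self_eq_norm_sq, ht2]; norm_num
  have e33 : ⟪t₃, t₃⟫ = (1:ℝ) := by
    rw [real_inner_self_eq_norm_sq, ht3]; norm_num
  have h21 : ⟪t₂, t₁⟫ = (1:ℝ)/2 := by rw [real_inner_comm]; exact h12
  have h31 : ⟪t₃, t₁⟫ = (1:ℝ)/2 := by rw [real_inner_comm]; exact h13
  have h32 : ⟪t₃, t₂⟫ = (1:ℝ)/2 := by rw [real_inner_comm]; exact h23
  have hxx : ⟪x, x⟫ = (1:ℝ) := by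
    rw [real_inner_self_eq_norm_sq, hx1]; norm_num
  have hyy : ⟪y, y⟫ = (1:ℝ) := by
    rw [real_inner_self_eq_norm_sq, hy1]; norm_num
  have hxx' : α^2 + β^2 + γ^2 + α*β + α*γ + β*γ = 1 := by
    have := hxx
    rw [hxe] at this
    simp only [inner_add_left, inner_add_right, real_inner_smul_left,
      real_inner_smul_right, e11, e22, e33, h12, h13, h23, h21, h31, h32] at this
    linear_combination this
  have hyy' : α'^2 + β'^2 + γ'^2 + α'*β' + α'*γ' + β'*γ' = 1 := by
    have := hyy
    rw [hye] at this
    simp only [inner_add_left, inner_add_right, real_inner_smul_left,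
      real_inner_smul_right, e11, e22, e33, h12, h13, h23, h21, h31, h32] at this
    linear_combination this
  have hxy : ⟪x, y⟫ = α*α' + β*β' + γ*γ' +
      (α*β' + α'*β + α*γ' + α'*γ + β*γ' + β'*γ)/2 := by
    rw [hxe, hye]
    simp only [inner_add_left, inner_add_right, real_inner_smul_left,
      real_inner_smul_right, e11, e22, e33, h12, h13, h23, h21, h31, h32]
    ring
  rw [hxy]
  -- let s = α+β+γ, s' = α'+β'+γ'; then s ≥ 1, s' ≥ 1 and
  -- the target equals (Σ αᵢα'ᵢ + s s')/2 ≥ 1/2.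
  have hc : 0 ≤ α*β + α*γ + β*γ := by positivity
  have hc' : 0 ≤ α'*β' + α'*γ' + β'*γ' := by positivity
  have hsq : 1 ≤ (α + β + γ)^2 := by nlinarith [hxx', hc]
  have hsq' : 1 ≤ (α' + β' + γ')^2 := by nlinarith [hyy', hc']
  have hsnn : 0 ≤ α + β + γ := by linarith
  have hsnn' : 0 ≤ α' + β' + γ' := by linarith
  have hs : 1 ≤ α + β + γ := by nlinarith [hsq, hsnn]
  have hs' : 1 ≤ α' + β' + γ' := by nlinarith [hsq', hsnn']
  have hss' : 1 ≤ (α + β + γ) * (α' + β' + γ') := by nlinarith [hs, hs']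
  nlinarith [hss', mul_nonneg hα hα', mul_nonneg hβ hβ', mul_nonneg hγ hγ']

lemma sdist_le_of_mem_sTri {t₁ t₂ t₃ : EuclideanSpace ℝ (Fin 3)}
    (ht : RegT t₁ t₂ t₃) {x y : EuclideanSpace ℝ (Fin 3)}
    (hx : x ∈ sTri t₁ t₂ t₃) (hy : y ∈ sTri t₁ t₂ t₃) :
    sdist x y ≤ Real.pi / 3 := by
  have h := inner_ge_half_of_mem_sTri ht hx hy
  unfold sdist
  have harcsin : Real.pi / 6 ≤ Real.arcsin ⟪x, y⟫ := by
    have : Real.arcsin (1/2) ≤ Real.arcsin ⟪x, y⟫ :=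
      Real.monotone_arcsin (by linarith)
    have h6 : Real.arcsin (1/2) = Real.pi / 6 := by
      rw [← Real.sin_pi_div_six]
      exact Real.arcsin_sin (by linarith [Real.pi_pos]) (by linarith [Real.pi_pos])
    linarith
  rw [Real.arccos_eq_pi_div_two_sub_arcsin]
  linarith

/-- A spherical triangle with a side of length strictly greater
than `π/3` cannot be placed (as any congruent copy) inside the regular
spherical triangle of side length `π/3`; in particular no congruent copy of it
admits a proper placement. -/
theorem long_side_not_placeable_in_T0
    (t₁ t₂ t₃ : EuclideanSpace ℝ (Fin 3)) (ht : RegT t₁ t₂ t₃)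
    (w₁ w₂ w₃ : EuclideanSpace ℝ (Fin 3))
    (h₁ : ‖w₁‖ = 1) (h₂ : ‖w₂‖ = 1) (h₃ : ‖w₃‖ = 1)
    (hlong : Real.pi / 3 < sdist w₁ w₂) :
    ¬(w₁ ∈ sTri t₁ t₂ t₃ ∧ w₂ ∈ sTri t₁ t₂ t₃ ∧ w₃ ∈ sTri t₁ t₂ t₃) ∧
      ¬∃ u₁ u₂ u₃ : EuclideanSpace ℝ (Fin 3),
        ‖u₁‖ = 1 ∧ ‖u₂‖ = 1 ∧ ‖u₃‖ = 1 ∧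
        sdist u₁ u₂ = sdist w₁ w₂ ∧ sdist u₁ u₃ = sdist w₁ w₃ ∧
        sdist u₂ u₃ = sdist w₂ w₃ ∧
        ProperlyPlaced t₁ t₂ t₃ u₁ u₂ u₃ := by
  constructor
  · rintro ⟨hw1, hw2, -⟩
    exact absurd (sdist_le_of_mem_sTri ht hw1 hw2) (not_le.mpr hlong)
  · rintro ⟨u₁, u₂, u₃, hu1, hu2, hu3, hd12, -, -, hu1t, hu2seg, -⟩
    have ht1mem : t₁ ∈ sTri t₁ t₂ t₃ :=
      ⟨ht.1, 1, 0, 0, zero_le_one, le_refl 0, le_refl 0, by simp⟩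
    have hu1mem : u₁ ∈ sTri t₁ t₂ t₃ := hu1t ▸ ht1mem
    have hu2mem : u₂ ∈ sTri t₁ t₂ t₃ := by
      obtain ⟨hn, α, β, hα, hβ, he⟩ := hu2seg
      exact ⟨hn, α, β, 0, hα, hβ, le_refl _, by simp [he]⟩
    have := sdist_le_of_mem_sTri ht hu1mem hu2mem
    rw [hd12] at this
    linarith
end

section
/- The geodesic diameter of a regular spherical triangle with side length π/3 equals π/3: for any two points x, y in the (closed, geodesically convex) regular spherical triangle t₁t₂t₃ with sides π/3, the geodesic distance d(x,y) ≤ π/3, with equality attained by pairs of vertices. -/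
open scoped RealInnerProductSpace

/-!
For points `∑ αᵢ tᵢ`, `∑ βⱼ tⱼ` of the triangle (`αᵢ, βⱼ ≥ 0`), all Gram entries `⟪tᵢ, tⱼ⟫` are
at least `1/2`, so `⟪∑ αᵢ tᵢ, ∑ βⱼ tⱼ⟫ ≥ (∑ αᵢ)(∑ βⱼ) / 2`; and since the `tᵢ` are unit vectors,
the triangle inequality forces `∑ αᵢ ≥ 1` for a unit vector `∑ αᵢ tᵢ`. Hence any two points of
the triangle have inner product at least `1/2 = cos (π/3)`.
-/

open Finset

section NonnegCombination

variable {E ι : Type*} [NormedAddCommGroup E] [InnerProductSpace ℝ E] [Fintype ι]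
  {v : ι → E} {α β : ι → ℝ}

theorem one_le_sum_of_norm_sum_smul_eq_one (hv : ∀ i, ‖v i‖ ≤ 1) (hα : ∀ i, 0 ≤ α i)
    (hx : ‖∑ i, α i • v i‖ = 1) : 1 ≤ ∑ i, α i :=
  calc 1 = ‖∑ i, α i • v i‖ := hx.symm
    _ ≤ ∑ i, ‖α i • v i‖ := norm_sum_le _ _
    _ ≤ ∑ i, α i := sum_le_sum fun i _ => by
        rw [norm_smul, Real.norm_of_nonneg (hα i)]
        exact mul_le_of_le_one_right (hα i) (hv i)

theorem mul_sum_mul_sum_le_inner_sum_smul {m : ℝ} (hv : ∀ i j, m ≤ ⟪v i, v j⟫)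
    (hα : ∀ i, 0 ≤ α i) (hβ : ∀ j, 0 ≤ β j) :
    m * ((∑ i, α i) * ∑ j, β j) ≤ ⟪∑ i, α i • v i, ∑ j, β j • v j⟫ := by
  rw [sum_mul_sum, mul_sum, sum_inner]
  refine sum_le_sum fun i _ => ?_
  rw [mul_sum, inner_sum]
  refine sum_le_sum fun j _ => ?_
  rw [real_inner_smul_left, real_inner_smul_right]
  nlinarith [mul_le_mul_of_nonneg_left (hv i j) (mul_nonneg (hα i) (hβ j))]

theorem le_inner_of_unit_sum_smul {m : ℝ} (hm : 0 ≤ m) (hv : ∀ i j, m ≤ ⟪v i, v j⟫)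
    (hv₁ : ∀ i, ‖v i‖ ≤ 1) (hα : ∀ i, 0 ≤ α i) (hβ : ∀ j, 0 ≤ β j)
    (hx : ‖∑ i, α i • v i‖ = 1) (hy : ‖∑ j, β j • v j‖ = 1) :
    m ≤ ⟪∑ i, α i • v i, ∑ j, β j • v j⟫ := by
  have hsα := one_le_sum_of_norm_sum_smul_eq_one hv₁ hα hx
  have hsβ := one_le_sum_of_norm_sum_smul_eq_one hv₁ hβ hy
  calc m ≤ m * ((∑ i, α i) * ∑ j, β j) :=
        le_mul_of_one_le_right hm (one_le_mul_of_one_le_of_one_le hsα hsβ)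
    _ ≤ _ := mul_sum_mul_sum_le_inner_sum_smul hv hα hβ

end NonnegCombination

theorem exists_nonneg_sum_of_mem_sTri {a b c x : EuclideanSpace ℝ (Fin 3)}
    (hx : x ∈ sTri a b c) :
    ‖x‖ = 1 ∧ ∃ α : Fin 3 → ℝ, (∀ i, 0 ≤ α i) ∧ x = ∑ i, α i • ![a, b, c] i := by
  obtain ⟨hx₁, α, β, γ, hα, hβ, hγ, rfl⟩ := hx
  refine ⟨hx₁, ![α, β, γ], fun i => ?_, ?_⟩
  · fin_cases i <;> assumption
  · simp [Fin.sum_univ_three]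

theorem RegT.half_le_inner {t₁ t₂ t₃ : EuclideanSpace ℝ (Fin 3)} (ht : RegT t₁ t₂ t₃)
    (i j : Fin 3) : 1 / 2 ≤ ⟪![t₁, t₂, t₃] i, ![t₁, t₂, t₃] j⟫ := by
  obtain ⟨h₁, h₂, h₃, h₁₂, h₁₃, h₂₃⟩ := ht
  fin_cases i <;> fin_cases j <;>
    norm_num [real_inner_comm, h₁, h₂, h₃, h₁₂, h₁₃, h₂₃]

theorem RegT.half_le_inner_of_mem_sTri {t₁ t₂ t₃ x y : EuclideanSpace ℝ (Fin 3)}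
    (ht : RegT t₁ t₂ t₃) (hx : x ∈ sTri t₁ t₂ t₃) (hy : y ∈ sTri t₁ t₂ t₃) :
    1 / 2 ≤ ⟪x, y⟫ := by
  obtain ⟨hx₁, α, hα, rfl⟩ := exists_nonneg_sum_of_mem_sTri hx
  obtain ⟨hy₁, β, hβ, rfl⟩ := exists_nonneg_sum_of_mem_sTri hy
  have hunit : ∀ i, ‖![t₁, t₂, t₃] i‖ ≤ 1 := by
    obtain ⟨h₁, h₂, h₃, -⟩ := ht
    intro i; fin_cases i <;> simp [h₁, h₂, h₃]
  exact le_inner_of_unit_sum_smul (by norm_num) ht.half_le_inner hunit hα hβ hx₁ hy₁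

theorem Real.arccos_one_half : Real.arccos (1 / 2) = Real.pi / 3 := by
  rw [← Real.cos_pi_div_three, Real.arccos_cos (by positivity) (by linarith [Real.pi_pos])]

/-- The geodesic diameter of the regular spherical triangle of
side length `π/3` equals `π/3`: any two of its points are at geodesic distance
at most `π/3`, and the bound is attained by a pair of vertices. -/
theorem regular_triangle_geodesic_diameter
    (t₁ t₂ t₃ : EuclideanSpace ℝ (Fin 3)) (ht : RegT t₁ t₂ t₃) :
    (∀ x ∈ sTri t₁ t₂ t₃, ∀ y ∈ sTri t₁ t₂ t₃, sdist x y ≤ Real.pi / 3) ∧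
      sdist t₁ t₂ = Real.pi / 3 := by
  refine ⟨fun x hx y hy => ?_, ?_⟩
  · rw [sdist, ← Real.arccos_one_half]
    exact Real.arccos_le_arccos (ht.half_le_inner_of_mem_sTri hx hy)
  · rw [sdist, ht.2.2.2.1, Real.arccos_one_half]
end

section
/- In the deformation of the proof of Lemma 2: let v₁v₂v₃ be a spherical isosceles triangle with |v₁v₂| = |v₁v₃| = s < π/3 and fixed apex angle α = ∠v₂v₁v₃. As s increases towards π/3 (with α fixed), the base angle ∠v₁v₂v₃ is strictly increasing in s. -/
/-! The spherical law of cosines, used once at the apex and once at a base vertex, gives the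
base angle of an isosceles triangle with legs `s` and apex angle `α` in closed form,
`β = π/2 - arctan (cos s * tan (α/2))`, i.e. `cot β = cos s * tan (α/2)`. Since `cos` is
strictly decreasing on `(0, π)` and `tan (α/2) > 0`, `β` is strictly increasing in `s`. -/

open scoped RealInnerProductSpace

open Real InnerProductGeometry

section InnerProductSpace

variable {V : Type*} [NormedAddCommGroup V] [InnerProductSpace ℝ V] {b : V}

theorem inner_sub_inner_smul_sub_inner_smul (hb : ‖b‖ = 1) (x y : V) :
    ⟪x - ⟪x, b⟫ • b, y - ⟪y, b⟫ • b⟫ = ⟪x, y⟫ - ⟪x, b⟫ * ⟪y, b⟫ := by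
  have hbb : ⟪b, b⟫ = 1 := by rw [real_inner_self_eq_norm_sq, hb, one_pow]
  simp only [inner_sub_left, inner_sub_right, real_inner_smul_left, real_inner_smul_right,
    hbb, real_inner_comm b y]
  ring

theorem norm_sub_inner_smul (hb : ‖b‖ = 1) {x : V} (hx : ‖x‖ = 1) :
    ‖x - ⟪x, b⟫ • b‖ = √(1 - ⟪x, b⟫ ^ 2) := by
  rw [norm_eq_sqrt_real_inner, inner_sub_inner_smul_sub_inner_smul hb,
    real_inner_self_eq_norm_sq, hx, one_pow, sq]

end InnerProductSpace

theorem sdist_comm (x y : EuclideanSpace ℝ (Fin 3)) : sdist x y = sdist y x := by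
  rw [sdist, sdist, real_inner_comm]

theorem cos_sdist {x y : EuclideanSpace ℝ (Fin 3)} (hx : ‖x‖ = 1) (hy : ‖y‖ = 1) :
    cos (sdist x y) = ⟪x, y⟫ := by
  have h := abs_real_inner_le_norm x y
  rw [hx, hy, one_mul, abs_le] at h
  exact cos_arccos h.1 h.2

theorem sin_sdist (x y : EuclideanSpace ℝ (Fin 3)) :
    sin (sdist x y) = √(1 - ⟪x, y⟫ ^ 2) :=
  sin_arccos _

theorem sAngle_mem_Icc (a b c : EuclideanSpace ℝ (Fin 3)) : sAngle a b c ∈ Set.Icc 0 π :=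
  ⟨angle_nonneg _ _, angle_le_pi _ _⟩

/-- The spherical law of cosines, solved for the angle. -/
theorem cos_sAngle {a b c : EuclideanSpace ℝ (Fin 3)} (ha : ‖a‖ = 1) (hb : ‖b‖ = 1)
    (hc : ‖c‖ = 1) :
    cos (sAngle a b c) = (cos (sdist a c) - cos (sdist a b) * cos (sdist c b)) /
      (sin (sdist a b) * sin (sdist c b)) := by
  rw [sAngle, cos_angle, inner_sub_inner_smul_sub_inner_smul hb, norm_sub_inner_smul hb ha,
    norm_sub_inner_smul hb hc, cos_sdist ha hc, cos_sdist ha hb, cos_sdist hc hb,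
    sin_sdist, sin_sdist]

theorem cos_sdist_eq_of_sAngle {a b c : EuclideanSpace ℝ (Fin 3)} (ha : ‖a‖ = 1)
    (hb : ‖b‖ = 1) (hc : ‖c‖ = 1) (hab : sin (sdist a b) ≠ 0) (hcb : sin (sdist c b) ≠ 0) :
    cos (sdist a c) = cos (sdist a b) * cos (sdist c b) +
      sin (sdist a b) * sin (sdist c b) * cos (sAngle a b c) := by
  rw [cos_sAngle ha hb hc, mul_div_cancel₀ _ (mul_ne_zero hab hcb)]
  ring

/-- Read `c, S` as `cos s, sin s` and `σ, κ` as `sin (α/2), cos (α/2)`: then `C` is the cosine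
of the base of the isosceles triangle, the left side is the cosine of a base angle by the law of
cosines, and the right side is `sin (arctan (cos s * tan (α/2)))`. -/
theorem isosceles_base_angle_identity {c S σ κ : ℝ} (hS : 0 < S) (hσ : 0 < σ) (hκ : 0 < κ)
    (hcS : c ^ 2 + S ^ 2 = 1) (hσκ : σ ^ 2 + κ ^ 2 = 1) :
    let C := c ^ 2 + S ^ 2 * (2 * κ ^ 2 - 1)
    (c - c * C) / (S * √(1 - C ^ 2)) = c * σ / κ / √(1 + (c * σ / κ) ^ 2) := by
  intro C
  have hminus : 1 - C = 2 * S ^ 2 * σ ^ 2 := by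
    simp only [C]; linear_combination (-1) * hcS - 2 * S ^ 2 * hσκ
  have hplus : 1 + C = 2 * (κ ^ 2 + c ^ 2 * σ ^ 2) := by
    simp only [C]; linear_combination (2 * κ ^ 2 - 1) * hcS - 2 * c ^ 2 * hσκ
  have hsqrt : √(1 - C ^ 2) = 2 * S * σ * √(κ ^ 2 + c ^ 2 * σ ^ 2) := by
    rw [show 1 - C ^ 2 = (2 * S * σ) ^ 2 * (κ ^ 2 + c ^ 2 * σ ^ 2) by
        linear_combination (1 + C) * hminus + 2 * S ^ 2 * σ ^ 2 * hplus,
      sqrt_mul (by positivity), sqrt_sq (by positivity)]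
  have hsqrt' : √(1 + (c * σ / κ) ^ 2) = √(κ ^ 2 + c ^ 2 * σ ^ 2) / κ := by
    rw [show 1 + (c * σ / κ) ^ 2 = (κ ^ 2 + c ^ 2 * σ ^ 2) / κ ^ 2 by field_simp,
      sqrt_div' _ (sq_nonneg κ), sqrt_sq hκ.le]
  rw [hsqrt, hsqrt', show c - c * C = c * (1 - C) by ring, hminus]
  field_simp

theorem sAngle_eq_pi_div_two_sub_arctan_of_isosceles {s α : ℝ} (hs : s ∈ Set.Ioo 0 π)
    (hα : α ∈ Set.Ioo 0 π)
    {v₁ v₂ v₃ : EuclideanSpace ℝ (Fin 3)} (hv₁ : ‖v₁‖ = 1) (hv₂ : ‖v₂‖ = 1) (hv₃ : ‖v₃‖ = 1)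
    (h₁₂ : sdist v₁ v₂ = s) (h₁₃ : sdist v₁ v₃ = s) (hapex : sAngle v₂ v₁ v₃ = α) :
    sAngle v₁ v₂ v₃ = π / 2 - arctan (cos s * tan (α / 2)) := by
  have hsin : 0 < sin s := sin_pos_of_pos_of_lt_pi hs.1 hs.2
  have hhalf : α / 2 ∈ Set.Ioo (-(π / 2)) (π / 2) :=
    ⟨by linarith [hα.1, pi_pos], by linarith [hα.2]⟩
  have hcos_base : cos (sdist v₂ v₃) = cos s ^ 2 + sin s ^ 2 * (2 * cos (α / 2) ^ 2 - 1) := by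
    rw [cos_sdist_eq_of_sAngle hv₂ hv₁ hv₃ (by rw [sdist_comm, h₁₂]; exact hsin.ne')
        (by rw [sdist_comm, h₁₃]; exact hsin.ne'), sdist_comm v₂, sdist_comm v₃, h₁₂, h₁₃,
      hapex, ← cos_two_mul, mul_div_cancel₀ _ two_ne_zero]
    ring
  refine injOn_cos (sAngle_mem_Icc _ _ _)
    ⟨by linarith [arctan_lt_pi_div_two (cos s * tan (α / 2))],
      by linarith [neg_pi_div_two_lt_arctan (cos s * tan (α / 2)), pi_pos]⟩ ?_
  rw [cos_pi_div_two_sub, sin_arctan, tan_eq_sin_div_cos, ← mul_div_assoc,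
    cos_sAngle hv₁ hv₂ hv₃, h₁₂, h₁₃, sdist_comm v₃, sin_sdist, ← cos_sdist hv₂ hv₃,
    hcos_base]
  exact isosceles_base_angle_identity hsin (sin_pos_of_pos_of_lt_pi (by linarith [hα.1])
    (by linarith [hhalf.2, pi_pos])) (cos_pos_of_mem_Ioo hhalf) (cos_sq_add_sin_sq s)
    (sin_sq_add_cos_sq _)

/-- For spherical isosceles triangles with fixed apex angle
`α ∈ (0, π)` and equal sides of length `s ∈ (0, π/3]`, the base angle is
strictly increasing in `s`: if `v₁ v₂ v₃` has sides `|v₁v₂| = |v₁v₃| = s` and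
`w₁ w₂ w₃` has sides `|w₁w₂| = |w₁w₃| = s'` with `0 < s < s' ≤ π/3`, both with
apex angle `α`, then the base angle of the first is smaller. -/
theorem isosceles_base_angle_strict_mono
    (α s s' : ℝ) (hα₀ : 0 < α) (hα₁ : α < Real.pi)
    (hs₀ : 0 < s) (hss' : s < s') (hs' : s' ≤ Real.pi / 3)
    (v₁ v₂ v₃ w₁ w₂ w₃ : EuclideanSpace ℝ (Fin 3))
    (hv₁ : ‖v₁‖ = 1) (hv₂ : ‖v₂‖ = 1) (hv₃ : ‖v₃‖ = 1)
    (hw₁ : ‖w₁‖ = 1) (hw₂ : ‖w₂‖ = 1) (hw₃ : ‖w₃‖ = 1)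
    (hvs : sdist v₁ v₂ = s) (hvs' : sdist v₁ v₃ = s)
    (hws : sdist w₁ w₂ = s') (hws' : sdist w₁ w₃ = s')
    (hva : sAngle v₂ v₁ v₃ = α) (hwa : sAngle w₂ w₁ w₃ = α) :
    sAngle v₁ v₂ v₃ < sAngle w₁ w₂ w₃ := by
  have hα : α ∈ Set.Ioo 0 π := ⟨hα₀, hα₁⟩
  have hs'π : s' < π := by linarith [pi_pos]
  rw [sAngle_eq_pi_div_two_sub_arctan_of_isosceles ⟨hs₀, hss'.trans hs'π⟩ hα
      hv₁ hv₂ hv₃ hvs hvs' hva,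
    sAngle_eq_pi_div_two_sub_arctan_of_isosceles ⟨hs₀.trans hss', hs'π⟩ hα
      hw₁ hw₂ hw₃ hws hws' hwa]
  have hcos : cos s' < cos s :=
    strictAntiOn_cos ⟨hs₀.le, by linarith⟩ ⟨(hs₀.trans hss').le, hs'π.le⟩ hss'
  have htan : 0 < tan (α / 2) := tan_pos_of_pos_of_lt_pi_div_two (by linarith) (by linarith)
  exact sub_lt_sub_left (arctan_strictMono (mul_lt_mul_of_pos_right hcos htan)) _
end

section
/- If a point v lies outside a compact convex body C ⊆ ℝ³ and every vertex of a convex polytope C is visible from v (the open segment (v, c) misses the interior of C for each vertex c), then v is not in the interior of any simplex spanned by interior points of C; in particular, for C a regular octahedron and Θ the regular tetrahedron spanned by four alternating faces of C, if all six vertices of C are visible from v then v is not in the interior of Θ. -/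
/-
The segment from a vertex `σ e₀` (σ = ±1) towards `v` enters `int C` as soon as
`|v₁| + |v₂| < 1 - σ v₀`: leaving the vertex, it changes the ℓ¹-norm at the rate
`|v₁| + |v₂| - (1 - σ v₀) < 0`. For `v ∈ int Θ` this holds with `σ v₀ = -|v₀|`: if `a, b` are the
signs of `v₁, v₂`, the face inequality `ab v₀ + a v₁ + b v₂ < 1` of `Θ` gives
`|v₁| + |v₂| - |v₀| < 1`.
-/
noncomputable def e (i : Fin 3) : EuclideanSpace ℝ (Fin 3) :=
  EuclideanSpace.single i 1

noncomputable def Oct : Set (EuclideanSpace ℝ (Fin 3)) :=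
  convexHull ℝ {e 0, e 1, e 2, -e 0, -e 1, -e 2}

def Tet : Set (EuclideanSpace ℝ (Fin 3)) :=
  {p | p 0 + p 1 + p 2 ≤ 1 ∧ p 0 - p 1 - p 2 ≤ 1 ∧
       -p 0 + p 1 - p 2 ≤ 1 ∧ -p 0 - p 1 + p 2 ≤ 1}

open Set

theorem Convex.sum_smul_mem_of_zero_mem {𝕜 ι E : Type*} [Field 𝕜] [LinearOrder 𝕜]
    [IsStrictOrderedRing 𝕜] [AddCommGroup E] [Module 𝕜 E] {s : Set E} (hs : Convex 𝕜 s)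
    (h0 : (0 : E) ∈ s) {t : Finset ι} {w : ι → 𝕜} {z : ι → E} (hw₀ : ∀ i ∈ t, 0 ≤ w i)
    (hw₁ : ∑ i ∈ t, w i ≤ 1) (hz : ∀ i ∈ t, z i ∈ s) :
    ∑ i ∈ t, w i • z i ∈ s := by
  have := hs.sum_mem (t := t.insertNone) (w := fun o => o.elim (1 - ∑ i ∈ t, w i) w)
    (z := fun o => o.elim 0 z) (by rintro (_ | i) hi <;> simp_all)
    (by simp [Finset.sum_insertNone]) (by rintro (_ | i) hi <;> simp_all)
  simpa [Finset.sum_insertNone] using this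

theorem ContinuousLinearMap.interior_setOf_le {E : Type*} [NormedAddCommGroup E]
    [NormedSpace ℝ E] {f : StrongDual ℝ E} (hf : f ≠ 0) (c : ℝ) :
    interior {x | f x ≤ c} = {x | f x < c} := by
  change interior (f ⁻¹' Iic c) = f ⁻¹' Iio c
  rw [← (f.isOpenMap_of_ne_zero hf).preimage_interior_eq_interior_preimage f.continuous,
    interior_Iic]

lemma e_apply (i j : Fin 3) : e i j = if j = i then 1 else 0 := by
  simp [e]

lemma convex_Oct : Convex ℝ Oct := convex_convexHull ℝ _

lemma zero_mem_Oct : (0 : EuclideanSpace ℝ (Fin 3)) ∈ Oct := by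
  have he : e 0 ∈ Oct := subset_convexHull ℝ _ (by simp)
  have hne : -e 0 ∈ Oct := subset_convexHull ℝ _ (by simp)
  simpa using convex_Oct he hne (by norm_num : (0 : ℝ) ≤ 1 / 2) (by norm_num : (0 : ℝ) ≤ 1 / 2)
    (by norm_num)

lemma sign_smul_e_mem_Oct (s : SignType) (i : Fin 3) : (s : ℝ) • e i ∈ Oct := by
  cases s
  · simpa using zero_mem_Oct
  · exact subset_convexHull ℝ _ (by fin_cases i <;> simp)
  · exact subset_convexHull ℝ _ (by fin_cases i <;> simp)

lemma mem_Oct_of_abs_add_abs_add_abs_le_one {p : EuclideanSpace ℝ (Fin 3)}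
    (hp : |p 0| + |p 1| + |p 2| ≤ 1) : p ∈ Oct := by
  have hsum : p = ∑ i, |p i| • ((SignType.sign (p i) : ℝ) • e i) := by
    simp_rw [smul_smul, abs_mul_sign]
    ext j
    fin_cases j <;> simp [Fin.sum_univ_three, e_apply]
  rw [hsum]
  exact convex_Oct.sum_smul_mem_of_zero_mem zero_mem_Oct (fun i _ => abs_nonneg _)
    (by simpa [Fin.sum_univ_three] using hp) (fun i _ => sign_smul_e_mem_Oct _ i)

lemma mem_interior_Oct_of_abs_add_abs_add_abs_lt_one {p : EuclideanSpace ℝ (Fin 3)}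
    (hp : |p 0| + |p 1| + |p 2| < 1) : p ∈ interior Oct :=
  interior_maximal (fun _ hq => mem_Oct_of_abs_add_abs_add_abs_le_one hq.le)
    (isOpen_lt (f := fun q : EuclideanSpace ℝ (Fin 3) => |q 0| + |q 1| + |q 2|) (by fun_prop)
      continuous_const) hp

lemma openSegment_inter_interior_Oct_nonempty {v : EuclideanSpace ℝ (Fin 3)} {σ : ℝ}
    (hσ : |σ| = 1) (hv : |v 1| + |v 2| < 1 - σ * v 0) :
    (openSegment ℝ v (σ • e 0) ∩ interior Oct).Nonempty := by
  set a := 1 - σ * v 0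
  have ha : 0 < a := by linarith [abs_nonneg (v 1), abs_nonneg (v 2)]
  -- any `s ∈ (0, 1)` with `s * a < 1` works: it keeps `p 0` on the side of the vertex
  set s := (a + 1)⁻¹
  have hs : 0 < s := by positivity
  have hs1 : s < 1 := inv_lt_one_of_one_lt₀ (by linarith)
  have hsa : s * a < 1 := by
    rw [inv_mul_lt_one₀ (by linarith)]
    linarith
  set p := s • v + (1 - s) • σ • e 0
  have hσσ : σ * σ = 1 := by rw [← abs_mul_self, abs_mul, hσ, one_mul]
  have hσp0 : σ * p 0 = 1 - s * a := by
    simp only [p, a, PiLp.add_apply, PiLp.smul_apply, smul_eq_mul, e_apply, ↓reduceIte, mul_one]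
    linear_combination (1 - s) * hσσ
  have hp0 : |p 0| = 1 - s * a := calc
    |p 0| = |σ * p 0| := by rw [abs_mul, hσ, one_mul]
    _ = 1 - s * a := by rw [hσp0, abs_of_pos (by linarith)]
  have hp1 : |p 1| = s * |v 1| := by simp [p, e_apply, abs_mul, abs_of_pos hs]
  have hp2 : |p 2| = s * |v 2| := by simp [p, e_apply, abs_mul, abs_of_pos hs]
  refine ⟨p, ⟨s, 1 - s, hs, by linarith, by ring, rfl⟩,
    mem_interior_Oct_of_abs_add_abs_add_abs_lt_one ?_⟩
  rw [hp0, hp1, hp2]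
  linarith [mul_pos hs (sub_pos.2 hv)]

lemma exists_vertex_openSegment_inter_interior_Oct_nonempty {v : EuclideanSpace ℝ (Fin 3)}
    (hv : |v 1| + |v 2| < 1 + |v 0|) :
    ∃ c ∈ ({e 0, -e 0} : Set (EuclideanSpace ℝ (Fin 3))),
      (openSegment ℝ v c ∩ interior Oct).Nonempty := by
  rcases le_total 0 (v 0) with h0 | h0
  · refine ⟨-e 0, by simp, ?_⟩
    simpa using openSegment_inter_interior_Oct_nonempty (σ := -1) (by simp)
      (by rw [abs_of_nonneg h0] at hv; linarith)
  · refine ⟨e 0, by simp, ?_⟩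
    simpa using openSegment_inter_interior_Oct_nonempty (σ := 1) (by simp)
      (by rw [abs_of_nonpos h0] at hv; linarith)

lemma lt_one_of_mem_interior_Tet {v : EuclideanSpace ℝ (Fin 3)} (hv : v ∈ interior Tet)
    {a b : ℝ} (ha : |a| = 1) (hb : |b| = 1) :
    a * b * v 0 + a * v 1 + b * v 2 < 1 := by
  let f : StrongDual ℝ (EuclideanSpace ℝ (Fin 3)) :=
    (a * b) • EuclideanSpace.proj 0 + a • EuclideanSpace.proj 1 + b • EuclideanSpace.proj 2
  have hf : f ≠ 0 := fun h => by
    have : a = 0 := by simpa [f, e_apply] using DFunLike.congr_fun h (e 1)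
    simp [this] at ha
  have hTet : Tet ⊆ {p | f p ≤ 1} := fun p ⟨h₁, h₂, h₃, h₄⟩ => by
    change a * b * p 0 + a * p 1 + b * p 2 ≤ 1
    rcases (abs_eq zero_le_one).1 ha with rfl | rfl <;>
      rcases (abs_eq zero_le_one).1 hb with rfl | rfl <;> linarith
  exact (ContinuousLinearMap.interior_setOf_le hf 1).subset (interior_mono hTet hv)

lemma abs_add_abs_lt_one_add_abs_of_mem_interior_Tet {v : EuclideanSpace ℝ (Fin 3)}
    (hv : v ∈ interior Tet) : |v 1| + |v 2| < 1 + |v 0| := by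
  have sign_choice (x : ℝ) : ∃ a : ℝ, |a| = 1 ∧ a * x = |x| := by
    rcases abs_cases x with ⟨h, -⟩ | ⟨h, -⟩
    exacts [⟨1, by simp, by simp [h]⟩, ⟨-1, by simp, by simp [h]⟩]
  obtain ⟨a, ha, ha'⟩ := sign_choice (v 1)
  obtain ⟨b, hb, hb'⟩ := sign_choice (v 2)
  have hv0 : -|v 0| ≤ a * b * v 0 := by
    simpa [abs_mul, ha, hb] using neg_abs_le (a * b * v 0)
  linarith [lt_one_of_mem_interior_Tet hv ha hb]

theorem visible_vertices_imply_outside_tetrahedron_general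
    (v : EuclideanSpace ℝ (Fin 3))
    (hvis : ∀ c ∈ ({e 0, e 1, e 2, -e 0, -e 1, -e 2} :
        Set (EuclideanSpace ℝ (Fin 3))),
      openSegment ℝ v c ∩ interior Oct = ∅) :
    v ∉ interior Tet := fun hv => by
  obtain ⟨c, hc, hne⟩ := exists_vertex_openSegment_inter_interior_Oct_nonempty
    (abs_add_abs_lt_one_add_abs_of_mem_interior_Tet hv)
  exact hne.ne_empty (hvis c (by rcases hc with rfl | rfl <;> simp))

/-- If a point `v` lies outside the regular octahedron `C` and
every vertex of `C` is visible from `v` (the open segment from `v` to each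
vertex misses the interior of `C`), then `v` does not lie in the interior of
the regular tetrahedron `Θ` spanned by four alternating faces of `C`. -/
theorem visible_vertices_imply_outside_tetrahedron
    (v : EuclideanSpace ℝ (Fin 3)) (hv : v ∉ Oct)
    (hvis : ∀ c ∈ ({e 0, e 1, e 2, -e 0, -e 1, -e 2} :
        Set (EuclideanSpace ℝ (Fin 3))),
      openSegment ℝ v c ∩ interior Oct = ∅) :
    v ∉ interior Tet :=
  visible_vertices_imply_outside_tetrahedron_general v hvis
end
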